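/- Let V(x)=k|x|^{-α} with k>0, 1<α≤2, and let (a,b) satisfy a>0, b≤0, 2a+b>0, 2a+3b≥0. Define μ̄ = 2a+b and J_k^{a,b}(φ) = S_k(φ) − (1/μ̄) K_k^{a,b}(φ). Then μ̄ J_k^{a,b}(φ) = −b∫V|φ|² − (b/2)∫(x·∇V)|φ|² − b‖φ‖_{L²}² + ((a+b)/2)‖φ‖_{L⁴}⁴. In particular J_k^{a,b}(φ) > 0 for every φ ∈ H^1(R^3) \ {0}. -/

import Mathlib

/-!
Expanding `J = S - K/(2a+b)` cancels the gradient term and leaves the stated identity. Since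
`V = k|x|^{-α}` is homogeneous of degree `-α`, Euler's relation gives `x·∇V = -αV` away from the
origin, so the potential terms combine to `-b(1 - α/2)∫V|φ|² ≥ 0`. The mass term `-b‖φ‖₂²` is
nonnegative as well, and `4(a + b) = (2a + b) + (2a + 3b) > 0` makes the quartic term strictly
positive once `φ ≠ 0`.
-/

open MeasureTheory Real Filter Topology
open scoped ENNReal RealInnerProductSpace

noncomputable section

abbrev E3 : Type := EuclideanSpace ℝ (Fin 3)

/-- The potential `V(x) = k * |x| ^ (-α)`. -/
def Vpot (k α : ℝ) (x : E3) : ℝ := k * ‖x‖ ^ (-α)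

/-- The complex Laplacian (sum of second partial derivatives). -/
def lapC (f : E3 → ℂ) (x : E3) : ℂ :=
  ∑ i : Fin 3, fderiv ℝ (fun y => fderiv ℝ f y (EuclideanSpace.single i (1:ℝ))) x
    (EuclideanSpace.single i (1:ℝ))

/-- The real Laplacian. -/
def lapR (f : E3 → ℝ) (x : E3) : ℝ :=
  ∑ i : Fin 3, fderiv ℝ (fun y => fderiv ℝ f y (EuclideanSpace.single i (1:ℝ))) x
    (EuclideanSpace.single i (1:ℝ))

/-- `∫ |∇φ|²`. -/
def gradSq (φ : E3 → ℂ) : ℝ := ∫ x, ‖fderiv ℝ φ x‖ ^ 2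

/-- `∫ |φ|²`. -/
def massI (φ : E3 → ℂ) : ℝ := ∫ x, ‖φ x‖ ^ 2

/-- `∫ V |φ|²`. -/
def potI (k α : ℝ) (φ : E3 → ℂ) : ℝ := ∫ x, Vpot k α x * ‖φ x‖ ^ 2

/-- `∫ |φ|⁴`. -/
def quartI (φ : E3 → ℂ) : ℝ := ∫ x, ‖φ x‖ ^ 4

/-- `∫ (x · ∇V) |φ|²`. -/
def xdVI (k α : ℝ) (φ : E3 → ℂ) : ℝ :=
  ∫ x, ⟪x, gradient (Vpot k α) x⟫ * ‖φ x‖ ^ 2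

/-- `∫ (x ∇²V xᵀ) |φ|²`. -/
def hessI (k α : ℝ) (φ : E3 → ℂ) : ℝ :=
  ∫ x, ⟪x, fderiv ℝ (gradient (Vpot k α)) x x⟫ * ‖φ x‖ ^ 2

/-- Squared `𝓗¹_k` norm:  `∫|∇φ|² + ∫V|φ|² + ∫|φ|²`. -/
def H1kSq (k α : ℝ) (φ : E3 → ℂ) : ℝ := gradSq φ + potI k α φ + massI φ

/-- The action functional `S_k`. -/
def Sk (k α : ℝ) (φ : E3 → ℂ) : ℝ := (1/2) * H1kSq k α φ - (1/4) * quartI φ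

/-- The scaling-derivative functional `K_k^{a,b}`. -/
def Kab (k α a b : ℝ) (φ : E3 → ℂ) : ℝ :=
  ((2*a+b)/2) * gradSq φ + ((2*a+3*b)/2) * potI k α φ + (b/2) * xdVI k α φ
    + ((2*a+3*b)/2) * massI φ - ((4*a+3*b)/4) * quartI φ

/-- The virial functional `P_k = K_k^{3,-2}`. -/
def Pk (k α : ℝ) (φ : E3 → ℂ) : ℝ :=
  2 * gradSq φ - xdVI k α φ - (3/2) * quartI φ

/-- The functional `I_k = K_k^{3,0}/3`. -/
def Ik (k α : ℝ) (φ : E3 → ℂ) : ℝ :=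
  gradSq φ + potI k α φ + massI φ - quartI φ

/-- The functional `J_k^{a,b} = S_k - K_k^{a,b}/(2a+b)`. -/
def Jab (k α a b : ℝ) (φ : E3 → ℂ) : ℝ := Sk k α φ - Kab k α a b φ / (2*a+b)

/-- The scaling `φ_λ^{a,b}(x) = e^{aλ} φ(e^{-bλ} x)`. -/
def scal (a b lam : ℝ) (φ : E3 → ℂ) : E3 → ℂ :=
  fun x => Real.exp (a * lam) • φ (Real.exp (-b * lam) • x)

/-- Membership in `H¹(ℝ³)` (with the relevant integrability properties). -/
def InH1 (φ : E3 → ℂ) : Prop :=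
  MemLp φ 2 volume ∧ MemLp φ 4 volume ∧
    Integrable (fun x => ‖fderiv ℝ φ x‖ ^ 2) volume

/-- The minimization threshold `n_k^{a,b}`. -/
def nThresh (k α a b : ℝ) : ℝ :=
  sInf {r | ∃ φ : E3 → ℂ, InH1 φ ∧ eLpNorm φ 2 volume ≠ 0 ∧
    Kab k α a b φ = 0 ∧ r = Sk k α φ}

/-- The threshold `n_k` defined with the virial functional `P_k`. -/
def nPk (k α : ℝ) : ℝ :=
  sInf {r | ∃ φ : E3 → ℂ, InH1 φ ∧ eLpNorm φ 2 volume ≠ 0 ∧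
    Pk k α φ = 0 ∧ r = Sk k α φ}

/-- The ground state threshold `n₀`. -/
def n0 (α : ℝ) : ℝ := nPk 0 α


section EulerRelation

variable {F : Type*} [NormedAddCommGroup F] [InnerProductSpace ℝ F]

theorem hasFDerivAt_norm_rpow_of_ne_zero {x : F} (hx : x ≠ 0) (p : ℝ) :
    HasFDerivAt (fun y : F ↦ ‖y‖ ^ p) ((p * ‖x‖ ^ (p - 2)) • innerSL ℝ x) x := by
  apply HasStrictFDerivAt.hasFDerivAt
  convert! (hasStrictFDerivAt_norm_sq x).rpow_const (p := p / 2) (by simp [hx]) using 0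
  simp_rw [← Real.rpow_natCast_mul (norm_nonneg _), ← Nat.cast_smul_eq_nsmul ℝ, smul_smul]
  ring_nf

theorem fderiv_norm_rpow_apply_self {x : F} (hx : x ≠ 0) (p : ℝ) :
    fderiv ℝ (fun y : F ↦ ‖y‖ ^ p) x x = p * ‖x‖ ^ p := by
  have hx' : 0 < ‖x‖ := norm_pos_iff.mpr hx
  rw [(hasFDerivAt_norm_rpow_of_ne_zero hx p).fderiv, smul_apply,
    innerSL_apply_apply, real_inner_self_eq_norm_sq, smul_eq_mul, mul_assoc,
    ← Real.rpow_natCast, ← Real.rpow_add hx']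
  norm_num

end EulerRelation

theorem inner_gradient_Vpot (k α : ℝ) {x : E3} (hx : x ≠ 0) :
    ⟪x, gradient (Vpot k α) x⟫ = -α * Vpot k α x := by
  have hV : HasFDerivAt (Vpot k α) (k • fderiv ℝ (fun y : E3 ↦ ‖y‖ ^ (-α)) x) x :=
    ((hasFDerivAt_norm_rpow_of_ne_zero hx (-α)).differentiableAt.hasFDerivAt).const_mul k
  rw [inner_gradient_right, hV.fderiv, smul_apply,
    fderiv_norm_rpow_apply_self hx, Vpot]
  simp only [RCLike.conj_to_real, smul_eq_mul]
  ring

theorem xdVI_eq_neg_mul_potI (k α : ℝ) (φ : E3 → ℂ) : xdVI k α φ = -α * potI k α φ := by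
  rw [xdVI, potI, ← integral_const_mul]
  refine integral_congr_ae ?_
  filter_upwards [compl_mem_ae_iff.mpr (measure_singleton (0 : E3))] with x hx
  rw [inner_gradient_Vpot k α hx, mul_assoc]

theorem potI_nonneg {k : ℝ} (hk : 0 ≤ k) (α : ℝ) (φ : E3 → ℂ) : 0 ≤ potI k α φ :=
  integral_nonneg fun x ↦ mul_nonneg (mul_nonneg hk (Real.rpow_nonneg (norm_nonneg x) _))
    (by positivity)

theorem massI_nonneg (φ : E3 → ℂ) : 0 ≤ massI φ :=
  integral_nonneg fun _ ↦ by positivity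

theorem integral_norm_pow_pos {X E : Type*} [MeasurableSpace X] {μ : Measure X}
    [NormedAddCommGroup E] {f : X → E} {n : ℕ} (hn : n ≠ 0) (hf : MemLp f n μ)
    (hf0 : ¬ f =ᵐ[μ] 0) : 0 < ∫ x, ‖f x‖ ^ n ∂μ := by
  have hsupp : Function.support (fun x ↦ ‖f x‖ ^ n) = Function.support f := by
    ext x; simp [hn]
  rw [integral_pos_iff_support_of_nonneg (fun x ↦ by positivity) (hf.integrable_norm_pow hn),
    hsupp, pos_iff_ne_zero, Ne, μ.measure_support_eq_zero_iff]
  exact hf0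

theorem mul_Jab_eq (k α : ℝ) {a b : ℝ} (hab : 2*a + b ≠ 0) (φ : E3 → ℂ) :
    (2*a + b) * Jab k α a b φ =
      -b * potI k α φ - (b/2) * xdVI k α φ - b * massI φ + ((a+b)/2) * quartI φ := by
  unfold Jab Sk Kab H1kSq
  field_simp
  ring

theorem stmt6_general (k α a b : ℝ) (hk : 0 < k) (hα2 : α ≤ 2)
    (hb : b ≤ 0) (h2ab : 0 < 2*a + b) (h2a3b : 0 ≤ 2*a + 3*b)
    (φ : E3 → ℂ) (hφ : InH1 φ) :
    (2*a + b) * Jab k α a b φ =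
      -b * potI k α φ - (b/2) * xdVI k α φ - b * massI φ + ((a+b)/2) * quartI φ ∧
    (eLpNorm φ 2 volume ≠ 0 → 0 < Jab k α a b φ) := by
  refine ⟨mul_Jab_eq k α h2ab.ne' φ, fun hφ0 ↦ ?_⟩
  have hquart : 0 < quartI φ := by
    refine integral_norm_pow_pos (n := 4) four_ne_zero hφ.2.1 fun h ↦ hφ0 ?_
    exact (eLpNorm_eq_zero_iff hφ.1.1 two_ne_zero).mpr h
  have hab : 0 < a + b := by linarith
  have hpot := potI_nonneg hk.le α φ
  have hmass := massI_nonneg φ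
  refine pos_of_mul_pos_right (a := 2*a + b) ?_ h2ab.le
  rw [mul_Jab_eq k α h2ab.ne' φ, xdVI_eq_neg_mul_potI]
  linarith [mul_nonneg (mul_nonneg (neg_nonneg.mpr hb) (sub_nonneg.mpr hα2)) hpot,
    mul_nonneg (neg_nonneg.mpr hb) hmass, mul_pos hab hquart]

theorem stmt6 (k α a b : ℝ) (hk : 0 < k) (hα1 : 1 < α) (hα2 : α ≤ 2)
    (ha : 0 < a) (hb : b ≤ 0) (h2ab : 0 < 2*a + b) (h2a3b : 0 ≤ 2*a + 3*b)
    (φ : E3 → ℂ) (hφ : InH1 φ)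
    (hpot : Integrable (fun x => Vpot k α x * ‖φ x‖ ^ 2) volume)
    (hxdv : Integrable (fun x => ⟪x, gradient (Vpot k α) x⟫ * ‖φ x‖ ^ 2) volume) :
    (2*a + b) * Jab k α a b φ =
      -b * potI k α φ - (b/2) * xdVI k α φ - b * massI φ + ((a+b)/2) * quartI φ ∧
    (eLpNorm φ 2 volume ≠ 0 → 0 < Jab k α a b φ) :=
  stmt6_general k α a b hk hα2 hb h2ab h2a3b φ hφ
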